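/- arXiv:1703.02163 — 5 statements merged into one kernel-verified Lean document; each statement's English description precedes it below -/
import Mathlib

section
/- The polynomial $g(x) = x^{n+1} - 2x^n + 1$, for $n \ge 2$, has exactly one real root in the open interval $(2n/(n+1), 2)$. -/
/-!
Write `g(x) = 1 - xⁿ (2 - x)`, so that `g'(x) = xⁿ⁻¹ ((n + 1) x - 2n)`. Hence `g` strictly decreases
on `[0, a]` and strictly increases on `[a, ∞)`, where `a = 2n/(n+1)`. Since `n ≥ 2` we have
`1 < a`, so `g(a) < g(1) = 0`, while `g(2) = 1 > 0`: the intermediate value theorem gives a root in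
`(a, 2)`, and monotonicity makes it unique.
-/

namespace Nbonacci

open Set

/-- `(x - 1)` times the `n`-bonacci polynomial `xⁿ - xⁿ⁻¹ - ⋯ - x - 1`. -/
def g (n : ℕ) (x : ℝ) : ℝ := x ^ (n + 1) - 2 * x ^ n + 1

lemma g_one (n : ℕ) : g n 1 = 0 := by norm_num [g]

lemma g_two (n : ℕ) : g n 2 = 1 := by simp only [g, pow_succ]; ring

lemma continuous_g (n : ℕ) : Continuous (g n) := by unfold g; fun_prop

lemma deriv_g {n : ℕ} (hn : 1 ≤ n) (x : ℝ) :
    deriv (g n) x = x ^ (n - 1) * ((n + 1) * x - 2 * n) := by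
  obtain ⟨m, rfl⟩ := Nat.exists_eq_add_of_le' hn
  have h : HasDerivAt (g (m + 1))
      (((m + 1 + 1 : ℕ) : ℝ) * x ^ (m + 1) - 2 * (((m + 1 : ℕ) : ℝ) * x ^ m)) x :=
    ((hasDerivAt_pow (m + 1 + 1) x).sub ((hasDerivAt_pow (m + 1) x).const_mul 2)).add_const 1
  rw [h.deriv]
  push_cast
  ring

lemma strictAntiOn_g {n : ℕ} (hn : 1 ≤ n) : StrictAntiOn (g n) (Icc 0 (2 * n / (n + 1))) := by
  refine strictAntiOn_of_deriv_neg (convex_Icc _ _) (continuous_g n).continuousOn fun x hx ↦ ?_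
  rw [interior_Icc] at hx
  rw [deriv_g hn]
  have hlt : x * (n + 1) < 2 * n := (lt_div_iff₀ (by positivity)).mp hx.2
  exact mul_neg_of_pos_of_neg (pow_pos hx.1 _) (by linarith)

lemma strictMonoOn_g {n : ℕ} (hn : 1 ≤ n) : StrictMonoOn (g n) (Ici (2 * n / (n + 1))) := by
  refine strictMonoOn_of_deriv_pos (convex_Ici _) (continuous_g n).continuousOn fun x hx ↦ ?_
  rw [interior_Ici] at hx
  rw [deriv_g hn]
  have hgt : 2 * n < x * (n + 1) := (div_lt_iff₀ (by positivity)).mp hx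
  exact mul_pos (pow_pos ((by positivity : (0 : ℝ) ≤ 2 * n / (n + 1)).trans_lt hx) _)
    (by linarith)

end Nbonacci

open Nbonacci in
/-- For `n ≥ 2`, the polynomial `g(x) = x^(n+1) - 2x^n + 1` has exactly one real root in
the open interval `(2n/(n+1), 2)`. -/
theorem unique_root_in_interval (n : ℕ) (hn : 2 ≤ n) :
    ∃! x : ℝ, x ∈ Set.Ioo (2 * n / (n + 1) : ℝ) 2 ∧ x ^ (n + 1) - 2 * x ^ n + 1 = 0 := by
  set a : ℝ := 2 * n / (n + 1)
  have hpos : (0 : ℝ) < n + 1 := by positivity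
  have one_lt_a : 1 < a := by
    rw [lt_div_iff₀ hpos]
    have : (2 : ℝ) ≤ n := by exact_mod_cast hn
    linarith
  have a_lt_two : a < 2 := by rw [div_lt_iff₀ hpos]; linarith
  have ga_neg : g n a < 0 := g_one n ▸
    strictAntiOn_g (by omega) ⟨zero_le_one, one_lt_a.le⟩ ⟨by positivity, le_rfl⟩ one_lt_a
  obtain ⟨x, hx, hgx⟩ := intermediate_value_Ioo a_lt_two.le (continuous_g n).continuousOn
    ⟨ga_neg, by rw [g_two]; exact one_pos⟩
  refine ⟨x, ⟨hx, hgx⟩, fun y ⟨hy, hgy⟩ ↦ (strictMonoOn_g (by omega)).injOn hy.1.le hx.1.le ?_⟩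
  exact hgy.trans hgx.symm
end

section
/- Let $n \ge 2$ be an even integer. Then the polynomial $g(x) = x^{n+1} - 2x^n + 1$ has exactly one real root $\omega$ in the interval $(-1, 0)$, and this root satisfies $-1 < \omega < -3^{-1/n}$. -/
/-!
Writing `g(x) = 1 - x^n (2 - x)`, the roots of `g` are the solutions of `x^n (2 - x) = 1`. For even
`n` the left side is strictly decreasing on `(-∞, 0]` and runs from `3` at `-1` down to `0` at `0`,
so the equation has exactly one solution `ω` in `(-1, 0)`. Since `2 - ω < 3` there, `ω^n > 1/3`,
i.e. `|ω| > 3^{-1/n}`.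
-/

open Set

theorem pow_succ_sub_two_mul_pow_add_one_eq_zero_iff {R : Type*} [CommRing R] (x : R) (n : ℕ) :
    x ^ (n + 1) - 2 * x ^ n + 1 = 0 ↔ x ^ n * (2 - x) = 1 := by
  constructor <;> intro h <;> linear_combination -h

section OrderedRing

variable {R : Type*} [Ring R] [LinearOrder R] [IsStrictOrderedRing R] {n : ℕ}

theorem Even.antitoneOn_pow_Iic (hn : Even n) : AntitoneOn (fun x : R => x ^ n) (Iic 0) := by
  intro a _ b hb hab
  simp only [← hn.neg_pow a, ← hn.neg_pow b]
  exact pow_le_pow_left₀ (neg_nonneg.2 hb) (neg_le_neg hab) n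

theorem Even.strictAntiOn_pow_mul_sub_Iic (hn : Even n) {c : R} (hc : 0 ≤ c) :
    StrictAntiOn (fun x : R => x ^ n * (c - x)) (Iic 0) := by
  intro a ha b hb hab
  have hca : c - b < c - a := sub_lt_sub_left hab c
  have hcb : 0 ≤ c - b := sub_nonneg.2 ((mem_Iic.1 hb).trans hc)
  calc b ^ n * (c - b) ≤ a ^ n * (c - b) :=
        mul_le_mul_of_nonneg_right (hn.antitoneOn_pow_Iic ha hb hab.le) hcb
    _ < a ^ n * (c - a) :=
        mul_lt_mul_of_pos_left hca (hn.pow_pos (hab.trans_le (mem_Iic.1 hb)).ne)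

end OrderedRing

theorem Real.rpow_neg_one_div_natCast_pow {a : ℝ} (ha : 0 ≤ a) {n : ℕ} (hn : n ≠ 0) :
    (a ^ (-(1 : ℝ) / n)) ^ n = a⁻¹ := by
  rw [neg_div, Real.rpow_neg ha, inv_pow, one_div, Real.rpow_inv_natCast_pow ha hn]

/-- For even `n ≥ 2`, the polynomial `g(x) = x^(n+1) - 2x^n + 1` has exactly one real root `ω`
in `(-1, 0)`, and this root satisfies `-1 < ω < -3^(-1/n)`. -/
theorem unique_negative_root (n : ℕ) (hn : 2 ≤ n) (heven : Even n) :
    (∃! ω : ℝ, ω ∈ Set.Ioo (-1 : ℝ) 0 ∧ ω ^ (n + 1) - 2 * ω ^ n + 1 = 0) ∧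
      ∀ ω : ℝ, ω ∈ Set.Ioo (-1 : ℝ) 0 → ω ^ (n + 1) - 2 * ω ^ n + 1 = 0 →
        -1 < ω ∧ ω < -(3 : ℝ) ^ (-(1 : ℝ) / n) := by
  have hn0 : n ≠ 0 := by omega
  simp only [pow_succ_sub_two_mul_pow_add_one_eq_zero_iff]
  have hanti := heven.strictAntiOn_pow_mul_sub_Iic (R := ℝ) zero_le_two
  refine ⟨?_, fun ω hω hroot => ⟨hω.1, ?_⟩⟩
  · obtain ⟨ω, hω, hroot⟩ : ∃ ω ∈ Ioo (-1 : ℝ) 0, ω ^ n * (2 - ω) = 1 :=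
      intermediate_value_Ioo' (by norm_num) (by fun_prop)
        (by norm_num [heven.neg_one_pow, hn0])
    refine ⟨ω, ⟨hω, hroot⟩, fun y hy => ?_⟩
    exact hanti.injOn hy.1.2.le hω.2.le (hy.2.trans hroot.symm)
  · have hpow : (3 ^ (-(1 : ℝ) / n)) ^ n < (-ω) ^ n := by
      rw [Real.rpow_neg_one_div_natCast_pow zero_le_three hn0, heven.neg_pow]
      nlinarith [heven.pow_pos hω.2.ne, hω.1]
    linarith [lt_of_pow_lt_pow_left₀ n (neg_nonneg.2 hω.2.le) hpow]
end

section
/- Let $\alpha$ be a nonzero algebraic number of degree $n = s + 2t$ over $\mathbb{Q}$, having real conjugates $\alpha_1, \ldots, \alpha_s$ and complex conjugates $\alpha_{s+1}, \ldots, \alpha_{s+t}, \overline{\alpha_{s+1}}, \ldots, \overline{\alpha_{s+t}}$. Then $\sum_{i=1}^s \alpha_i^2 + \sum_{j=1}^t |\alpha_{s+j}|^2 \ge n \cdot 2^{s/n - 1} \cdot |N(\alpha)|^{2/n}$, where $N(\alpha)$ is the product of all $n$ conjugates of $\alpha$. -/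
open Polynomial

/-- Let `α` be a nonzero algebraic number of degree `n = s + 2t` over `ℚ`, with real
conjugates `a 1, …, a s` and complex conjugates `b 1, …, b t` together with their complex
conjugates. Then the sum of the squares satisfies
`∑ aᵢ² + ∑ |bⱼ|² ≥ n · 2^(s/n - 1) · |N(α)|^(2/n)`, where `N(α)` is the product of all `n`
conjugates of `α`. -/
theorem size_lower_bound_norm (s t : ℕ) (p : Polynomial ℚ) (hmonic : p.Monic)
    (hirr : Irreducible p) (hdeg : p.natDegree = s + 2 * t)
    (a : Fin s → ℝ) (b : Fin t → ℂ) (hb : ∀ j, (b j).im ≠ 0)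
    (hfac : p.map (algebraMap ℚ ℂ) =
      (∏ i, (X - C ((a i : ℂ)))) *
        ∏ j, ((X - C (b j)) * (X - C (starRingEnd ℂ (b j)))))
    (h0 : p.coeff 0 ≠ 0) :
    ∑ i, (a i) ^ 2 + ∑ j, ‖b j‖ ^ 2 ≥
      ((s + 2 * t : ℕ) : ℝ) * (2 : ℝ) ^ ((s : ℝ) / (s + 2 * t) - 1) *
        |(∏ i, a i) * ∏ j, ‖b j‖ ^ 2| ^ ((2 : ℝ) / (s + 2 * t)) := by
  rcases Nat.eq_zero_or_pos (s + 2 * t) with hn0 | hnpos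
  · obtain ⟨hs, ht⟩ : s = 0 ∧ t = 0 := by omega
    subst hs; subst ht
    simp
  set n' : ℝ := ((s + 2 * t : ℕ) : ℝ) with hn'
  have hn : (0 : ℝ) < n' := by rw [hn']; exact_mod_cast hnpos
  have hne : n' ≠ 0 := ne_of_gt hn
  have hcast : n' = (s : ℝ) + 2 * t := by rw [hn']; push_cast; ring
  set N : ℝ := (∏ i, a i) * ∏ j, ‖b j‖ ^ 2 with hN
  -- weights and values for weighted AM-GM
  set w : Fin s ⊕ Fin t → ℝ := Sum.elim (fun _ => 1 / n') (fun _ => 2 / n') with hw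
  set z : Fin s ⊕ Fin t → ℝ :=
    Sum.elim (fun i => (a i) ^ 2) (fun j => ‖b j‖ ^ 2 / 2) with hz
  have hwpos : ∀ i ∈ Finset.univ, (0 : ℝ) ≤ w i := by
    rintro (i | j) _ <;> simp [hw] <;> positivity
  have hw1 : ∑ i, w i = 1 := by
    rw [Fintype.sum_sum_type]
    simp only [hw, Sum.elim_inl, Sum.elim_inr, Finset.sum_const, Finset.card_univ,
      Fintype.card_fin, nsmul_eq_mul]
    have e : (s : ℝ) * (1 / n') + (t : ℝ) * (2 / n') = ((s : ℝ) + 2 * t) / n' := by ring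
    rw [e, ← hcast, div_self hne]
  have hznn : ∀ i ∈ Finset.univ, (0 : ℝ) ≤ z i := by
    rintro (i | j) _ <;> simp [hz] <;> positivity
  have hamgm := Real.geom_mean_le_arith_mean_weighted Finset.univ w z hwpos hw1 hznn
  -- the arithmetic side
  have hsum : ∑ i, w i * z i =
      (1 / n') * (∑ i, (a i) ^ 2 + ∑ j, ‖b j‖ ^ 2) := by
    rw [Fintype.sum_sum_type]
    simp only [hw, hz, Sum.elim_inl, Sum.elim_inr]
    rw [mul_add]
    congr 1
    · rw [Finset.mul_sum]
    · rw [Finset.mul_sum]; exact Finset.sum_congr rfl fun j _ => by ring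
  -- the geometric side
  set Q : ℝ := (∏ i, (a i) ^ 2) * ∏ j, (‖b j‖ ^ 2 / 2) ^ 2 with hQ
  have hQnn : 0 ≤ Q := by positivity
  have hprod : ∏ i, z i ^ w i = Q ^ ((1 : ℝ) / n') := by
    rw [Fintype.prod_sum_type]
    simp only [hw, hz, Sum.elim_inl, Sum.elim_inr]
    have h2 : ∀ j : Fin t, (‖b j‖ ^ 2 / 2 : ℝ) ^ ((2 : ℝ) / n')
        = ((‖b j‖ ^ 2 / 2) ^ 2) ^ ((1 : ℝ) / n') := by
      intro j
      rw [← Real.rpow_natCast (‖b j‖ ^ 2 / 2) 2, ← Real.rpow_mul (by positivity)]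
      congr 1
      push_cast
      ring
    rw [Finset.prod_congr rfl (fun j _ => h2 j)]
    rw [Real.finset_prod_rpow _ _ (fun i _ => by positivity) _,
      Real.finset_prod_rpow _ _ (fun j _ => by positivity) _,
      ← Real.mul_rpow (by positivity) (by positivity)]
  -- Q in terms of N
  have hQN : Q = |N| ^ 2 / 2 ^ (2 * t) := by
    rw [sq_abs, hQ, hN]
    simp only [div_pow, Finset.prod_div_distrib, Finset.prod_pow, Finset.prod_const,
      Finset.card_univ, Fintype.card_fin]
    ring
  -- AM-GM conclusion
  have key : n' * Q ^ ((1 : ℝ) / n') ≤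
      ∑ i, (a i) ^ 2 + ∑ j, ‖b j‖ ^ 2 := by
    rw [hprod, hsum] at hamgm
    calc n' * Q ^ ((1 : ℝ) / n')
        ≤ n' * ((1 / n') * (∑ i, (a i) ^ 2 + ∑ j, ‖b j‖ ^ 2)) :=
          mul_le_mul_of_nonneg_left hamgm hn.le
      _ = ∑ i, (a i) ^ 2 + ∑ j, ‖b j‖ ^ 2 := by field_simp
  -- identify the geometric mean with the right-hand side
  have hrhs : n' * Q ^ ((1 : ℝ) / n') =
      n' * (2 : ℝ) ^ ((s : ℝ) / (s + 2 * t) - 1) * |N| ^ ((2 : ℝ) / (s + 2 * t)) := by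
    rw [hQN, Real.div_rpow (by positivity) (by positivity)]
    rw [← Real.rpow_natCast |N| 2, ← Real.rpow_natCast (2 : ℝ) (2 * t)]
    rw [← Real.rpow_mul (abs_nonneg N), ← Real.rpow_mul (by norm_num)]
    rw [div_eq_mul_inv, ← Real.rpow_neg (by norm_num)]
    have e1 : ((2 : ℕ) : ℝ) * (1 / n') = (2 : ℝ) / ((s : ℝ) + 2 * t) := by
      rw [← hcast]; push_cast; ring
    have h3 : (s : ℝ) + 2 * t ≠ 0 := hcast ▸ hne
    have e2 : -(((2 * t : ℕ) : ℝ) * (1 / n')) = (s : ℝ) / ((s : ℝ) + 2 * t) - 1 := by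
      rw [hcast]
      push_cast
      field_simp
      all_goals ring
    rw [e1, e2]
    ring
  rw [ge_iff_le, ← hrhs]
  exact key
end

section
/- Let $\alpha$ be a nonzero algebraic integer of degree $n \le 23$ with $s$ real conjugates $\alpha_1, \ldots, \alpha_s$ and $2t$ complex conjugates $\alpha_{s+1}, \ldots, \alpha_{s+t}, \overline{\alpha_{s+1}}, \ldots, \overline{\alpha_{s+t}}$ (so $n = s + 2t$). If $\sum_{i=1}^s \alpha_i^2 + \sum_{j=1}^t |\alpha_{s+j}|^2 < s + t$, then $\alpha$ is an algebraic unit. -/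
/-!
Write `n = s + 2t` and `S = ∑ αᵢ² + ∑ |α_{s+j}|²`. AM-GM applied to the `n` numbers `αᵢ²` and
`|α_{s+j}|² / 2` (the latter each taken twice, once per conjugate) gives
`N(α)² ≤ 4ᵗ (S / n)ⁿ`. If `α` is not a unit then `|N(α)| ≥ 2`, so `S < s + t` would force
`(1 + s/n)ⁿ > 2^(s+2)`. This fails for `n ≤ 23`: from `exp u ≥ e u` one gets
`2^(x + 2/n) ≥ (e log 2 / 2) · 2^(2/23) · (1 + x) > 1 + x`.
-/

open Polynomial Finset Real

theorem Real.prod_le_mean_pow_card {ι : Type*} [Fintype ι] (z : ι → ℝ) (hz : ∀ i, 0 ≤ z i) :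
    ∏ i, z i ≤ ((∑ i, z i) / Fintype.card ι) ^ Fintype.card ι := by
  rcases isEmpty_or_nonempty ι with hι | hι
  · simp
  have hcard : (0 : ℝ) < Fintype.card ι := by exact_mod_cast Fintype.card_pos
  have amgm := geom_mean_le_arith_mean univ (fun _ ↦ 1) z (fun _ _ ↦ zero_le_one)
    (by simpa using hcard) (fun i _ ↦ hz i)
  simp only [rpow_one, one_mul, sum_const, card_univ, nsmul_eq_mul, mul_one] at amgm
  calc ∏ i, z i = ((∏ i, z i) ^ (Fintype.card ι : ℝ)⁻¹) ^ Fintype.card ι := by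
        rw [← rpow_natCast, ← rpow_mul (prod_nonneg fun i _ ↦ hz i),
          inv_mul_cancel₀ hcard.ne', rpow_one]
    _ ≤ _ := by gcongr; exact rpow_nonneg (prod_nonneg fun i _ ↦ hz i) _

-- `e log 2 / 2` is the minimum of `2 ^ x / (1 + x)` over `x > -1`.
theorem one_lt_exp_one_mul_log_two_div_two_mul_rpow :
    1 < exp 1 * log 2 / 2 * 2 ^ (2 / 23 : ℝ) := by
  have hq := quadratic_le_exp_of_nonneg (x := log 2 * (2 / 23)) (by positivity)
  rw [← rpow_def_of_pos two_pos] at hq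
  have h1 : 2.7182818283 * 0.6931471803 < exp 1 * log 2 := by
    gcongr
    exacts [exp_one_gt_d9, log_two_gt_d9]
  nlinarith [log_two_gt_d9]

theorem one_add_lt_two_rpow_add (x : ℝ) {y : ℝ} (hy : 2 / 23 ≤ y) : 1 + x < 2 ^ (x + y) := by
  rcases le_or_gt (1 + x) 0 with hx | hx
  · exact hx.trans_lt (by positivity)
  have hexp : exp 1 * ((1 + x) * log 2) ≤ 2 ^ (1 + x) := by
    rw [rpow_def_of_pos two_pos, mul_comm (log 2)]
    exact exp_one_mul_le_exp
  have hy' : (2 : ℝ) ^ (2 / 23 : ℝ) ≤ 2 ^ y := rpow_le_rpow_of_exponent_le one_le_two hy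
  have hsplit : (2 : ℝ) ^ (x + y) = 2 ^ (1 + x) / 2 * 2 ^ y := by
    rw [rpow_add two_pos, rpow_add two_pos, rpow_one]; ring
  calc 1 + x < (1 + x) * (exp 1 * log 2 / 2 * 2 ^ (2 / 23 : ℝ)) :=
        lt_mul_of_one_lt_right hx one_lt_exp_one_mul_log_two_div_two_mul_rpow
    _ = exp 1 * ((1 + x) * log 2) / 2 * 2 ^ (2 / 23 : ℝ) := by ring
    _ ≤ 2 ^ (1 + x) / 2 * 2 ^ y := by gcongr
    _ = 2 ^ (x + y) := hsplit.symm

theorem add_pow_lt_two_pow_mul_pow {n : ℕ} (hn₀ : 0 < n) (hn : n ≤ 23) (s : ℕ) :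
    ((n + s : ℕ) : ℝ) ^ n < 2 ^ (s + 2) * (n : ℝ) ^ n := by
  have hnR : (0 : ℝ) < n := by exact_mod_cast hn₀
  have hy : 2 / 23 ≤ (2 / n : ℝ) := by
    gcongr; exact_mod_cast hn
  have key := one_add_lt_two_rpow_add (s / n) hy
  have hexp : ((s : ℝ) / n + 2 / n) * n = ((s + 2 : ℕ) : ℝ) := by
    field_simp; push_cast; ring
  calc ((n + s : ℕ) : ℝ) ^ n = (1 + s / n) ^ n * (n : ℝ) ^ n := by
        rw [← mul_pow]; congr 1; field_simp; push_cast; ring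
    _ < ((2 : ℝ) ^ ((s : ℝ) / n + 2 / n)) ^ n * (n : ℝ) ^ n := by
        gcongr
    _ = 2 ^ (s + 2) * (n : ℝ) ^ n := by
        rw [← rpow_natCast _ n, ← rpow_mul zero_le_two, hexp, rpow_natCast]

section

variable {ι κ : Type*} [Fintype ι] [Fintype κ]

theorem norm_coeff_zero_prod_conj (a : ι → ℝ) (b : κ → ℂ) :
    ‖((∏ i, (X - C (a i : ℂ))) *
        ∏ j, ((X - C (b j)) * (X - C (starRingEnd ℂ (b j))))).coeff 0‖ =
      (∏ i, |a i|) * ∏ j, ‖b j‖ ^ 2 := by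
  simp only [coeff_zero_eq_eval_zero, eval_mul, eval_prod, eval_sub, eval_X, eval_C, zero_sub,
    neg_mul_neg, Complex.mul_conj, norm_mul, norm_prod, norm_neg, Complex.norm_real,
    Real.norm_eq_abs, Complex.normSq_eq_norm_sq, abs_pow, abs_norm]

theorem sq_prod_abs_mul_prod_norm_sq_le (a : ι → ℝ) (b : κ → ℂ) :
    ((∏ i, |a i|) * ∏ j, ‖b j‖ ^ 2) ^ 2 ≤ 4 ^ Fintype.card κ *
      ((∑ i, a i ^ 2 + ∑ j, ‖b j‖ ^ 2) / (Fintype.card ι + 2 * Fintype.card κ : ℕ)) ^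
        (Fintype.card ι + 2 * Fintype.card κ) := by
  have amgm := prod_le_mean_pow_card
    (Sum.elim (fun i ↦ a i ^ 2) (Sum.elim (fun j ↦ ‖b j‖ ^ 2 / 2) (fun j ↦ ‖b j‖ ^ 2 / 2)))
    (by rintro (i | j | j) <;> simp only [Sum.elim_inl, Sum.elim_inr] <;> positivity)
  simp only [Fintype.prod_sum_type, Fintype.sum_sum_type, Sum.elim_inl, Sum.elim_inr,
    Fintype.card_sum, ← two_mul] at amgm
  rw [← sum_div, mul_div_cancel₀ _ two_ne_zero, prod_div_distrib, prod_const, card_univ] at amgm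
  calc ((∏ i, |a i|) * ∏ j, ‖b j‖ ^ 2) ^ 2
      = 4 ^ Fintype.card κ * ((∏ i, a i ^ 2) *
          ((∏ j, ‖b j‖ ^ 2) / 2 ^ Fintype.card κ * ((∏ j, ‖b j‖ ^ 2) / 2 ^ Fintype.card κ))) := by
        rw [mul_pow, ← prod_pow, show (4 : ℝ) = 2 ^ 2 by norm_num, ← pow_mul]
        simp only [sq_abs]
        field_simp
        ring
    _ ≤ _ := by gcongr

theorem sq_prod_abs_mul_prod_norm_sq_lt_four (a : ι → ℝ) (b : κ → ℂ)
    (hn : Fintype.card ι + 2 * Fintype.card κ ≤ 23)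
    (hsmall : ∑ i, a i ^ 2 + ∑ j, ‖b j‖ ^ 2 < (Fintype.card ι : ℝ) + Fintype.card κ) :
    ((∏ i, |a i|) * ∏ j, ‖b j‖ ^ 2) ^ 2 < 4 := by
  set s := Fintype.card ι
  set t := Fintype.card κ
  set n := s + 2 * t with hn_def
  set S := ∑ i, a i ^ 2 + ∑ j, ‖b j‖ ^ 2
  have hn₀ : 0 < n := by
    by_contra! h
    have : s = 0 ∧ t = 0 := by omega
    simp only [this, CharP.cast_eq_zero, add_zero] at hsmall
    linarith [show 0 ≤ S by positivity]
  have hnR : (0 : ℝ) < n := by exact_mod_cast hn₀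
  calc ((∏ i, |a i|) * ∏ j, ‖b j‖ ^ 2) ^ 2
      ≤ 4 ^ t * (S / n) ^ n := sq_prod_abs_mul_prod_norm_sq_le a b
    _ < 4 ^ t * (((s : ℝ) + t) / n) ^ n := by gcongr
    _ = 4 ^ t * ((n + s : ℕ) : ℝ) ^ n / (2 ^ n * (n : ℝ) ^ n) := by
        rw [← mul_pow, mul_div_assoc, ← div_pow]
        congr 2
        field_simp
        push_cast [hn_def]
        ring
    _ < 4 ^ t * (2 ^ (s + 2) * (n : ℝ) ^ n) / (2 ^ n * (n : ℝ) ^ n) := by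
        gcongr
        exact add_pow_lt_two_pow_mul_pow hn₀ hn s
    _ = 4 := by
        field_simp
        rw [hn_def, show (4 : ℝ) = 2 ^ 2 by norm_num, ← pow_mul, ← pow_add, ← pow_add]
        ring_nf

end

theorem small_size_implies_unit_general (s t : ℕ) (p : Polynomial ℤ) (hn : s + 2 * t ≤ 23)
    (a : Fin s → ℝ) (b : Fin t → ℂ)
    (hfac : p.map (algebraMap ℤ ℂ) =
      (∏ i, (X - C ((a i : ℂ)))) *
        ∏ j, ((X - C (b j)) * (X - C (starRingEnd ℂ (b j)))))
    (h0 : p.coeff 0 ≠ 0)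
    (hsmall : ∑ i, (a i) ^ 2 + ∑ j, ‖b j‖ ^ 2 < (s : ℝ) + t) :
    p.coeff 0 = 1 ∨ p.coeff 0 = -1 := by
  have hnorm : |(p.coeff 0 : ℝ)| = (∏ i, |a i|) * ∏ j, ‖b j‖ ^ 2 := by
    rw [← norm_coeff_zero_prod_conj, ← hfac, coeff_map, algebraMap_int_eq, eq_intCast,
      Complex.norm_intCast]
  have hsq : (p.coeff 0 : ℝ) ^ 2 < 4 := by
    rw [← sq_abs, hnorm]
    apply sq_prod_abs_mul_prod_norm_sq_lt_four <;> simpa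
  have hsqℤ : p.coeff 0 ^ 2 < 2 ^ 2 := by norm_num; exact_mod_cast hsq
  obtain ⟨hlo, hhi⟩ := abs_lt.mp (abs_lt_of_sq_lt_sq hsqℤ zero_le_two)
  omega

/-- Let `α` be a nonzero algebraic integer of degree `n = s + 2t ≤ 23` with `s` real
conjugates `a i` and `2t` complex conjugates `b j, conj (b j)`. If
`∑ aᵢ² + ∑ |bⱼ|² < s + t`, then `α` is an algebraic unit. -/
theorem small_size_implies_unit (s t : ℕ) (p : Polynomial ℤ) (hmonic : p.Monic)
    (hirr : Irreducible p) (hdeg : p.natDegree = s + 2 * t) (hn : s + 2 * t ≤ 23)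
    (a : Fin s → ℝ) (b : Fin t → ℂ) (hb : ∀ j, (b j).im ≠ 0)
    (hfac : p.map (algebraMap ℤ ℂ) =
      (∏ i, (X - C ((a i : ℂ)))) *
        ∏ j, ((X - C (b j)) * (X - C (starRingEnd ℂ (b j)))))
    (h0 : p.coeff 0 ≠ 0)
    (hsmall : ∑ i, (a i) ^ 2 + ∑ j, ‖b j‖ ^ 2 < (s : ℝ) + t) :
    p.coeff 0 = 1 ∨ p.coeff 0 = -1 :=
  small_size_implies_unit_general s t p hn a b hfac h0 hsmall
end

section
/- For real numbers $a > |b| > 0$, we have $\int_0^1 \log(a + b\cos(\pi x))\, dx = \log\left(\frac{a + \sqrt{a^2 - b^2}}{2}\right)$. In particular, $\int_0^1 \log(5 - 4\cos(\pi x))\, dx = 2\log 2$. -/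
/-!
With `s = √(a² - b²)`, `c = (a + s) / 2` and `r = b / (a + s)` one has `|r| < 1` and
`a + b cos x = c (1 + 2 r cos x + r²) = c ‖e^{ix} + r‖²`: `c` is the larger root of
`c² - a c + b² / 4`. On the unit circle `‖z + r‖ = ‖1 + r z⁻¹‖`, and `w ↦ log ‖1 + r w‖` is harmonic
on the closed unit disc, so the mean of `log ‖z + r‖` over the circle is its value `0` at `w = 0`.
The integrand is symmetric under `x ↦ 2π - x`, so its integral over `[0, π]` vanishes as well,
leaving `π log c`.
-/

open Real intervalIntegral

theorem intervalIntegral.integral_zero_two_mul_eq_two_mul_of_symm {E : Type*}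
    [NormedAddCommGroup E] [NormedSpace ℝ E] {f : ℝ → E} {c : ℝ}
    (hsymm : ∀ x, f (2 * c - x) = f x) (hf : IntervalIntegrable f MeasureTheory.volume 0 c) :
    ∫ x in 0..2 * c, f x = (2 : ℝ) • ∫ x in 0..c, f x := by
  have hreflect : (fun x ↦ f (2 * c - x)) = f := funext hsymm
  have hf' : IntervalIntegrable f MeasureTheory.volume c (2 * c) := by
    have := (hf.comp_sub_left (2 * c)).symm
    rw [hreflect] at this
    convert this using 1 <;> ring
  have hsecond : ∫ x in c..2 * c, f x = ∫ x in 0..c, f x := by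
    have := integral_comp_sub_left f (2 * c) (a := c) (b := 2 * c)
    rw [hreflect] at this
    convert this using 2 <;> ring
  rw [← integral_add_adjacent_intervals hf hf', hsecond, two_smul]

lemma one_add_two_mul_cos_add_sq_pos {r : ℝ} (hr : |r| < 1) (x : ℝ) :
    0 < 1 + 2 * r * cos x + r ^ 2 := by
  have hrcos : |r * cos x| ≤ |r| := by
    rw [abs_mul]
    exact mul_le_of_le_one_right (abs_nonneg r) (abs_cos_le_one x)
  nlinarith [neg_abs_le (r * cos x), sq_abs r, abs_nonneg r]

lemma continuous_log_one_add_two_mul_cos_add_sq {r : ℝ} (hr : |r| < 1) :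
    Continuous fun x ↦ log (1 + 2 * r * cos x + r ^ 2) :=
  Continuous.log (by fun_prop) fun x ↦ (one_add_two_mul_cos_add_sq_pos hr x).ne'

lemma log_norm_circleMap_add (r θ : ℝ) :
    log ‖circleMap 0 1 θ + r‖ = log (1 + 2 * r * cos θ + r ^ 2) / 2 := by
  have hsq : ‖circleMap 0 1 θ + r‖ ^ 2 = 1 + 2 * r * cos θ + r ^ 2 := by
    rw [Complex.sq_norm, Complex.normSq_apply]
    simp only [circleMap_zero, Complex.add_re, Complex.add_im, Complex.ofReal_one, one_mul,
      Complex.exp_ofReal_mul_I_re, Complex.exp_ofReal_mul_I_im, Complex.ofReal_re,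
      Complex.ofReal_im, add_zero]
    nlinarith [sin_sq_add_cos_sq θ]
  rw [← hsq, log_pow]
  ring

lemma integral_log_one_add_two_mul_cos_add_sq {r : ℝ} (hr : |r| < 1) :
    ∫ x in 0..π, log (1 + 2 * r * cos x + r ^ 2) = 0 := by
  have hcircle : ∫ x in 0..2 * π, log (1 + 2 * r * cos x + r ^ 2) = 0 := by
    have := circleAverage_log_norm_sub_const₀ (a := -r) (by simpa using hr)
    simpa [circleAverage_def, log_norm_circleMap_add, pi_ne_zero] using this
  rw [integral_zero_two_mul_eq_two_mul_of_symm (fun x ↦ by rw [cos_two_pi_sub])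
    ((continuous_log_one_add_two_mul_cos_add_sq hr).intervalIntegrable _ _)] at hcircle
  simpa using hcircle

theorem integral_log_add_mul_cos {a b : ℝ} (hab : |b| < a) :
    ∫ x in 0..π, log (a + b * cos x) = π * log ((a + √(a ^ 2 - b ^ 2)) / 2) := by
  set s := √(a ^ 2 - b ^ 2)
  have hs : s ^ 2 = a ^ 2 - b ^ 2 := sq_sqrt (by nlinarith [abs_nonneg b, sq_abs b])
  have has : 0 < a + s := by linarith [abs_nonneg b, sqrt_nonneg (a ^ 2 - b ^ 2)]
  set r := b / (a + s)
  have hr : |r| < 1 := by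
    rw [abs_div, abs_of_pos has, div_lt_one has]
    linarith [sqrt_nonneg (a ^ 2 - b ^ 2)]
  have hfactor : ∀ x, a + b * cos x = (a + s) / 2 * (1 + 2 * r * cos x + r ^ 2) := by
    intro x
    simp only [r]
    field_simp
    linear_combination -hs
  have hlog : ∀ x, log (a + b * cos x) = log ((a + s) / 2) + log (1 + 2 * r * cos x + r ^ 2) := by
    intro x
    rw [hfactor, log_mul (by positivity) (one_add_two_mul_cos_add_sq_pos hr x).ne']
  simp_rw [hlog]
  rw [integral_add intervalIntegrable_const
    ((continuous_log_one_add_two_mul_cos_add_sq hr).intervalIntegrable _ _),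
    integral_log_one_add_two_mul_cos_add_sq hr, integral_const]
  simp

theorem integral_log_add_mul_cos_pi_mul {a b : ℝ} (hab : |b| < a) :
    ∫ x in (0 : ℝ)..1, log (a + b * cos (π * x)) = log ((a + √(a ^ 2 - b ^ 2)) / 2) := by
  rw [integral_comp_mul_left (fun x ↦ log (a + b * cos x)) pi_ne_zero, mul_zero, mul_one,
    integral_log_add_mul_cos hab, smul_eq_mul, inv_mul_cancel_left₀ pi_ne_zero]

theorem log_cos_integral_general (a b : ℝ) (hab : |b| < a) :
    (∫ x in (0 : ℝ)..1, Real.log (a + b * Real.cos (Real.pi * x)) =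
      Real.log ((a + Real.sqrt (a ^ 2 - b ^ 2)) / 2)) ∧
    (∫ x in (0 : ℝ)..1, Real.log (5 - 4 * Real.cos (Real.pi * x)) = 2 * Real.log 2) := by
  refine ⟨integral_log_add_mul_cos_pi_mul hab, ?_⟩
  have hsqrt : √((5 : ℝ) ^ 2 - (-4) ^ 2) = 3 := by
    rw [show (5 : ℝ) ^ 2 - (-4) ^ 2 = 3 ^ 2 by norm_num, sqrt_sq (by norm_num)]
  have h := integral_log_add_mul_cos_pi_mul (a := 5) (b := -4) (by norm_num)
  rw [hsqrt, show ((5 : ℝ) + 3) / 2 = 2 ^ 2 by norm_num, log_pow] at h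
  simpa [← sub_eq_add_neg] using h

/-- For `a > |b| > 0`, `∫₀¹ log(a + b cos(πx)) dx = log((a + √(a² - b²))/2)`.
In particular, `∫₀¹ log(5 - 4cos(πx)) dx = 2 log 2`. -/
theorem log_cos_integral (a b : ℝ) (hb : 0 < |b|) (hab : |b| < a) :
    (∫ x in (0 : ℝ)..1, Real.log (a + b * Real.cos (Real.pi * x)) =
      Real.log ((a + Real.sqrt (a ^ 2 - b ^ 2)) / 2)) ∧
    (∫ x in (0 : ℝ)..1, Real.log (5 - 4 * Real.cos (Real.pi * x)) = 2 * Real.log 2) :=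
  log_cos_integral_general a b hab
end
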